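/- arXiv:2211.06584 — 4 statements merged into one kernel-verified Lean document; each statement's English description precedes it below -/
import Mathlib

section
/- The only Pell-Lucas numbers Q_n (defined by Q_0 = 2, Q_1 = 2, Q_{n+2} = 2Q_{n+1} + Q_n) that are repdigits (numbers of the form a(10^l - 1)/9 with 1 ≤ a ≤ 9, l ≥ 1) are Q_0 = Q_1 = 2 and Q_2 = 6. -/
/-- The Pell-Lucas sequence: Q₀ = 2, Q₁ = 2, Q_{n+2} = 2Q_{n+1} + Q_n. -/
def pellLucas : ℕ → ℕ
  | 0 => 2
  | 1 => 2
  | (n + 2) => 2 * pellLucas (n + 1) + pellLucas n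

lemma pellLucas_pos (n : ℕ) : 1 ≤ pellLucas n := by
  induction n using Nat.strong_induction_on with
  | _ n ih =>
    match n with
    | 0 => decide
    | 1 => decide
    | (m + 2) =>
      have h1 := ih (m + 1) (by omega)
      show 1 ≤ 2 * pellLucas (m + 1) + pellLucas m
      omega

lemma pellLucas_mono : Monotone pellLucas := by
  apply monotone_nat_of_le_succ
  intro n
  match n with
  | 0 => decide
  | (m + 1) =>
    have := pellLucas_pos m
    show pellLucas (m + 1) ≤ 2 * pellLucas (m + 1) + pellLucas m
    have := pellLucas_pos (m + 1)
    omega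

lemma pellLucas_period_pair (n : ℕ) :
    pellLucas (n + 24) % 160 = pellLucas n % 160 ∧
    pellLucas (n + 25) % 160 = pellLucas (n + 1) % 160 := by
  induction n with
  | zero => constructor <;> decide
  | succ k ih =>
    obtain ⟨h1, h2⟩ := ih
    refine ⟨h2, ?_⟩
    have e1 : pellLucas (k + 26) = 2 * pellLucas (k + 25) + pellLucas (k + 24) := rfl
    have e2 : pellLucas (k + 2) = 2 * pellLucas (k + 1) + pellLucas k := rfl
    show pellLucas (k + 26) % 160 = pellLucas (k + 2) % 160
    rw [e1, e2]
    omega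

lemma pellLucas_mod_reduce (n : ℕ) :
    pellLucas n % 160 = pellLucas (n % 24) % 160 := by
  have key : ∀ k m, pellLucas (m + 24 * k) % 160 = pellLucas m % 160 := by
    intro k
    induction k with
    | zero => intro m; rfl
    | succ j ihj =>
      intro m
      have : m + 24 * (j + 1) = (m + 24 * j) + 24 := by ring
      rw [this, (pellLucas_period_pair (m + 24 * j)).1, ihj]
  conv_lhs => rw [← Nat.mod_add_div n 24]
  exact key (n / 24) (n % 24)

lemma pellLucas_mod_check :
    ∀ r ∈ Finset.range 24, ∀ a ∈ Finset.Icc 1 9, (9 * pellLucas r + a) % 160 ≠ 0 := by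
  decide

theorem pellLucas_repdigit (n : ℕ) :
    (∃ a l : ℕ, 1 ≤ a ∧ a ≤ 9 ∧ 1 ≤ l ∧ 9 * pellLucas n = a * (10 ^ l - 1)) ↔
      n = 0 ∨ n = 1 ∨ n = 2 := by
  constructor
  · rintro ⟨a, l, ha1, ha9, hl, heq⟩
    by_contra hn
    push_neg at hn
    obtain ⟨hn0, hn1, hn2⟩ := hn
    rcases lt_or_ge n 11 with h11 | h11
    · -- small cases: n ∈ {3,...,10}
      have hl6 : l ≤ 5 := by
        by_contra hl6
        push_neg at hl6
        have h10 : 10 ^ 6 ≤ 10 ^ l := Nat.pow_le_pow_right (by norm_num) hl6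
        have hQ : pellLucas n ≤ pellLucas 10 := pellLucas_mono (by omega)
        have hQ10 : pellLucas 10 = 6726 := by decide
        have : a * (10 ^ l - 1) ≥ 1 * (10 ^ 6 - 1) :=
          Nat.mul_le_mul ha1 (by omega)
        omega
      interval_cases n <;> norm_num [pellLucas] at heq <;>
        interval_cases l <;> norm_num at heq <;> omega
    · -- large cases: n ≥ 11, use mod 160
      have hQbig : 10 ^ 4 ≤ pellLucas n := by
        have : pellLucas 11 ≤ pellLucas n := pellLucas_mono h11
        have h11v : pellLucas 11 = 16238 := by decide
        omega
      have hl5 : 5 ≤ l := by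
        by_contra hl5
        push_neg at hl5
        have : 10 ^ l ≤ 10 ^ 4 := Nat.pow_le_pow_right (by norm_num) (by omega)
        have : a * (10 ^ l - 1) ≤ 9 * (10 ^ 4 - 1) :=
          Nat.mul_le_mul ha9 (by omega)
        omega
      have hdvd : 160 ∣ 10 ^ l := by
        have : (10 : ℕ) ^ 5 ∣ 10 ^ l := pow_dvd_pow 10 hl5
        exact dvd_trans ⟨625, by norm_num⟩ this
      have hsum : 160 ∣ 9 * pellLucas n + a := by
        have h1 : (1 : ℕ) ≤ 10 ^ l := Nat.one_le_pow _ _ (by norm_num)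
        have : 9 * pellLucas n + a = a * 10 ^ l := by
          have := heq
          nlinarith [Nat.sub_add_cancel h1]
        rw [this]
        exact Dvd.dvd.mul_left hdvd a
      have hmod := pellLucas_mod_reduce n
      have hcheck := pellLucas_mod_check (n % 24)
        (Finset.mem_range.mpr (Nat.mod_lt n (by norm_num))) a
        (Finset.mem_Icc.mpr ⟨ha1, ha9⟩)
      omega
  · rintro (rfl | rfl | rfl)
    · exact ⟨2, 1, by norm_num, by norm_num, le_refl 1, by decide⟩
    · exact ⟨2, 1, by norm_num, by norm_num, le_refl 1, by decide⟩
    · exact ⟨6, 1, by norm_num, by norm_num, le_refl 1, by decide⟩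
end

section
/- For every integer k ≥ 2, the polynomial Φ_k(x) = x^k - 2x^{k-1} - x^{k-2} - ... - x - 1 has exactly one real root γ with |γ| > 1, and this root satisfies φ²(1 - φ^{-k}) < γ < φ², where φ = (1+√5)/2. -/
noncomputable def φ : ℝ := (1 + Real.sqrt 5) / 2

/-- `γ` is a root of the characteristic polynomial
`Φ_k(x) = x^k - 2x^{k-1} - x^{k-2} - ⋯ - x - 1` of the `k`-Pell-Lucas sequence. -/
def IsCharRoot (k : ℕ) (γ : ℝ) : Prop :=
  γ ^ k = 2 * γ ^ (k - 1) + ∑ i ∈ Finset.range (k - 1), γ ^ i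

/-!
Multiplying by `x - 1` turns `Φ_k(x) = 0` into `x^(k-1) (x² - 3x + 1) + 1 = 0` (for `x ≠ 1`).
Since `x² - 3x + 1 > 5` for `x < -1`, no root lies below `-1`; and since `Φ_k(x) / x^k` is strictly
increasing on `(0, ∞)`, there is at most one positive root. The quadratic factor vanishes at `φ²`,
so the left-hand side is `1 > 0` there, while at `L = φ² - φ^(2-k)` it is at most `-1`; the
intermediate value theorem then places a root in `(L, φ²)`, and `L ≥ φ > 1`.
-/

open Finset

lemma phi_sq : φ ^ 2 = φ + 1 := Real.goldenRatio_sq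

lemma one_lt_phi : 1 < φ := Real.one_lt_goldenRatio

lemma phi_pos : 0 < φ := Real.goldenRatio_pos

lemma phi_sq_mul_one_sub_zpow (n : ℕ) :
    φ ^ 2 * (1 - φ ^ (-((n + 2 : ℕ) : ℤ))) = φ ^ 2 - (φ ^ n)⁻¹ := by
  rw [zpow_neg, zpow_natCast]
  field_simp [phi_pos.ne']
  ring

lemma phi_le_phi_sq_sub_inv_pow (n : ℕ) : φ ≤ φ ^ 2 - (φ ^ n)⁻¹ := by
  have : (φ ^ n)⁻¹ ≤ 1 := inv_le_one_of_one_le₀ (one_le_pow₀ one_lt_phi.le)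
  linarith [phi_sq]

lemma pow_mul_pow_lt_pow_mul_pow {R : Type*} [CommSemiring R] [PartialOrder R]
    [IsStrictOrderedRing R] {a b : R} (ha : 0 < a) (hab : a < b) {i n : ℕ} (hin : i < n) :
    a ^ n * b ^ i < b ^ n * a ^ i := by
  obtain ⟨d, rfl⟩ := Nat.exists_eq_add_of_lt hin
  have hd : a ^ (d + 1) < b ^ (d + 1) := pow_lt_pow_left₀ hab ha.le (Nat.succ_ne_zero d)
  calc a ^ (i + d + 1) * b ^ i = a ^ (d + 1) * (a ^ i * b ^ i) := by ring
    _ < b ^ (d + 1) * (a ^ i * b ^ i) :=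
        mul_lt_mul_of_pos_right hd (mul_pos (pow_pos ha i) (pow_pos (ha.trans hab) i))
    _ = b ^ (i + d + 1) * a ^ i := by ring

lemma not_isCharRoot_zero (x : ℝ) : ¬IsCharRoot 0 x := by
  norm_num [IsCharRoot]

lemma isCharRoot_succ_iff (m : ℕ) {x : ℝ} (hx : x ≠ 1) :
    IsCharRoot (m + 1) x ↔ x ^ m * (x ^ 2 - 3 * x + 1) + 1 = 0 := by
  have hgeom : (∑ i ∈ range m, x ^ i) * (x - 1) = x ^ m - 1 := geom_sum_mul x m
  simp only [IsCharRoot, Nat.add_sub_cancel]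
  constructor
  · intro h
    linear_combination (x - 1) * h + hgeom
  · intro h
    have hx' : x - 1 ≠ 0 := sub_ne_zero.mpr hx
    apply mul_right_cancel₀ hx'
    linear_combination h - hgeom

namespace IsCharRoot

variable {k : ℕ}

lemma neg_one_le {x : ℝ} (hx : IsCharRoot k x) : -1 ≤ x := by
  by_contra! hlt
  cases k with
  | zero => exact not_isCharRoot_zero x hx
  | succ m =>
    have h := (isCharRoot_succ_iff m (by linarith : x ≠ 1)).mp hx
    have hpow : 1 ≤ |x| ^ m := one_le_pow₀ (by rw [abs_of_neg (by linarith)]; linarith)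
    have hquad : 5 < x ^ 2 - 3 * x + 1 := by nlinarith
    have habs : |x| ^ m * (x ^ 2 - 3 * x + 1) = 1 := by
      rw [← abs_pow, ← abs_of_pos (by linarith : 0 < x ^ 2 - 3 * x + 1), ← abs_mul,
        eq_neg_of_add_eq_zero_left h, abs_neg, abs_one]
    nlinarith

/-- Cross-multiplied form of the strict monotonicity of `Φ_k(x) / x^k` on `(0, ∞)`. -/
lemma le_of_pos {a b : ℝ} (ha0 : 0 < a) (ha : IsCharRoot k a) (hb : IsCharRoot k b) : b ≤ a := by
  by_contra! hab
  cases k with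
  | zero => exact not_isCharRoot_zero a ha
  | succ m =>
    simp only [IsCharRoot, Nat.add_sub_cancel] at ha hb
    have hlead : a ^ (m + 1) * b ^ m < b ^ (m + 1) * a ^ m :=
      pow_mul_pow_lt_pow_mul_pow ha0 hab (Nat.lt_succ_self m)
    have hsum : a ^ (m + 1) * ∑ i ∈ range m, b ^ i ≤ b ^ (m + 1) * ∑ i ∈ range m, a ^ i := by
      rw [mul_sum, mul_sum]
      exact sum_le_sum fun i hi =>
        (pow_mul_pow_lt_pow_mul_pow ha0 hab (Nat.lt_succ_of_lt (mem_range.mp hi))).le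
    have key : 2 * (a ^ (m + 1) * b ^ m) + a ^ (m + 1) * ∑ i ∈ range m, b ^ i
        = 2 * (b ^ (m + 1) * a ^ m) + b ^ (m + 1) * ∑ i ∈ range m, a ^ i := by
      linear_combination b ^ (m + 1) * ha - a ^ (m + 1) * hb
    linarith

lemma eq_of_pos {a b : ℝ} (ha0 : 0 < a) (hb0 : 0 < b) (ha : IsCharRoot k a)
    (hb : IsCharRoot k b) : a = b :=
  le_antisymm (hb.le_of_pos hb0 ha) (ha.le_of_pos ha0 hb)

end IsCharRoot

lemma charPoly_mul_sub_one_neg_at_lower (n : ℕ) :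
    (φ ^ 2 - (φ ^ n)⁻¹) ^ (n + 1) * ((φ ^ 2 - (φ ^ n)⁻¹) ^ 2 - 3 * (φ ^ 2 - (φ ^ n)⁻¹) + 1)
      + 1 < 0 := by
  set ε := (φ ^ n)⁻¹ with hε
  set L := φ ^ 2 - ε
  have hε_pos : 0 < ε := inv_pos.mpr (pow_pos phi_pos n)
  have hε_le : ε ≤ 1 := inv_le_one_of_one_le₀ (one_le_pow₀ one_lt_phi.le)
  have hquad : L ^ 2 - 3 * L + 1 = -(ε * (2 * φ - 1 - ε)) := by
    simp only [L]
    linear_combination (φ ^ 2 + φ - 2 * ε - 1) * phi_sq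
  -- `L ≥ φ` makes `L^(n+1) ε ≥ φ^(n+1) φ^(-n) = φ`.
  have hLε : φ ≤ L ^ (n + 1) * ε := by
    have hφε : φ ^ (n + 1) * ε = φ := by
      rw [hε, pow_succ]; field_simp [phi_pos.ne']
    calc φ = φ ^ (n + 1) * ε := hφε.symm
      _ ≤ L ^ (n + 1) * ε :=
        mul_le_mul_of_nonneg_right
          (pow_le_pow_left₀ phi_pos.le (phi_le_phi_sq_sub_inv_pow n) _) hε_pos.le
  have hprod : 2 ≤ L ^ (n + 1) * ε * (2 * φ - 1 - ε) :=
    calc 2 = φ * (2 * φ - 2) := by linear_combination -2 * phi_sq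
      _ ≤ L ^ (n + 1) * ε * (2 * φ - 1 - ε) :=
        mul_le_mul hLε (by linarith) (by linarith [one_lt_phi]) (phi_pos.le.trans hLε)
  rw [hquad]
  linarith

lemma exists_isCharRoot_mem_Ioo (n : ℕ) :
    ∃ c ∈ Set.Ioo (φ ^ 2 - (φ ^ n)⁻¹) (φ ^ 2), IsCharRoot (n + 2) c := by
  set f : ℝ → ℝ := fun x => x ^ (n + 1) * (x ^ 2 - 3 * x + 1) + 1
  have hL : 1 < φ ^ 2 - (φ ^ n)⁻¹ := one_lt_phi.trans_le (phi_le_phi_sq_sub_inv_pow n)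
  have hfu : f (φ ^ 2) = 1 := by
    have : (φ ^ 2) ^ 2 - 3 * φ ^ 2 + 1 = 0 := by linear_combination (φ ^ 2 + φ - 1) * phi_sq
    simp only [f, this, mul_zero, zero_add]
  have hcont : ContinuousOn f (Set.Icc (φ ^ 2 - (φ ^ n)⁻¹) (φ ^ 2)) := by fun_prop
  obtain ⟨c, hc, hfc⟩ := intermediate_value_Ioo
    (sub_le_self _ (inv_pos.mpr (pow_pos phi_pos n)).le) hcont
    ⟨charPoly_mul_sub_one_neg_at_lower n, by rw [hfu]; exact one_pos⟩
  exact ⟨c, hc, (isCharRoot_succ_iff (n + 1) (by linarith [hc.1])).mpr hfc⟩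

theorem charPoly_dominant_root (k : ℕ) (hk : 2 ≤ k) :
    (∃! γ : ℝ, IsCharRoot k γ ∧ 1 < |γ|) ∧
      ∀ γ : ℝ, IsCharRoot k γ ∧ 1 < |γ| →
        φ ^ 2 * (1 - φ ^ (-(k : ℤ))) < γ ∧ γ < φ ^ 2 := by
  obtain ⟨n, rfl⟩ : ∃ n, k = n + 2 := ⟨k - 2, by omega⟩
  obtain ⟨c, ⟨hLc, hcu⟩, hc⟩ := exists_isCharRoot_mem_Ioo n
  have hc1 : 1 < c := (one_lt_phi.trans_le (phi_le_phi_sq_sub_inv_pow n)).trans hLc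
  have huniq : ∀ γ, IsCharRoot (n + 2) γ ∧ 1 < |γ| → γ = c := by
    rintro γ ⟨hγ, hγ1⟩
    have hγ_pos : 0 < γ := by
      cases abs_cases γ <;> linarith [hγ.neg_one_le]
    exact hγ.eq_of_pos hγ_pos (by linarith) hc
  rw [phi_sq_mul_one_sub_zpow]
  refine ⟨⟨c, ⟨hc, by rwa [abs_of_pos (by linarith)]⟩, huniq⟩, fun γ hγ => ?_⟩
  rw [huniq γ hγ]
  exact ⟨hLc, hcu⟩
end

section
/- Let φ = (1+√5)/2 and k ≥ 2. For the dominant root γ of x^k - 2x^{k-1} - ... - x - 1 and g_k(z) = (z-1)/((k+1)z² - 3kz + k - 1), there do not exist positive integers n, m, l and digits 1 ≤ a, b ≤ 9 with 81(2γ-2)g_k(γ)·γ^n·10^{-(m+l)}/(ab) = 1; equivalently, (2γ-2)g_k(γ) is never equal to (ab/81)·γ^{-n}·10^{m+l}. -/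
/-!
Clearing denominators, the equation reads `162 (γ - 1)² γⁿ = N · D(γ)` with
`N = ab · 10^(m+l) ≥ 100` and `D = gDen k` the denominator of `g k`. This is a relation with
integer coefficients, so it also holds at every conjugate `θ` of `γ`. As `Φ_k` is monic with
constant term `-1`, the absolute values of the conjugates multiply to `1`; since `γ > 12/5`, the
smallest one satisfies `|θ| < 1` and `|θ|^(k-1) ≤ 5/12`. From `Φ_k(θ) = 0` we get
`θ^(k-1) (θ² - 3θ + 1) = -1`, whence `D(θ) θ^(k-1) = (θ² - 1) θ^(k-1) - k` has size about `k`,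
whereas `162 |θ - 1|² |θ|ⁿ` is at most `162 (1 + |θ|)² |θ|`, which is too small.
-/

open Polynomial Finset

def IsDomRoot (k : ℕ) (γ : ℝ) : Prop :=
  1 < γ ∧ γ ^ k = 2 * γ ^ (k - 1) + ∑ i ∈ Finset.range (k - 1), γ ^ i

noncomputable def g (k : ℕ) (z : ℝ) : ℝ :=
  (z - 1) / (((k : ℝ) + 1) * z ^ 2 - 3 * (k : ℝ) * z + ((k : ℝ) - 1))

theorem Multiset.exists_mem_erase_pow_mul_le_one {α M : Type*} [DecidableEq α] [CommMonoid M]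
    [LinearOrder M] [MulLeftMono M] (f : α → M) {s : Multiset α} {x : α} (hx : x ∈ s)
    (hfx : 1 < f x) (hprod : (s.map f).prod = 1) {n : ℕ} (hn : Multiset.card s ≤ n + 1) :
    ∃ y ∈ s.erase x, f y < 1 ∧ f y ^ n * f x ≤ 1 := by
  set r := s.erase x
  have hs : s = x ::ₘ r := (Multiset.cons_erase hx).symm
  rw [hs, Multiset.map_cons, Multiset.prod_cons] at hprod
  rw [hs, Multiset.card_cons] at hn
  have hr_lt : (r.map f).prod < 1 := by
    by_contra! h
    exact (one_lt_mul_of_lt_of_le' hfx h).ne' hprod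
  have hr0 : r ≠ 0 := by
    rintro hr
    simp [hr] at hr_lt
  obtain ⟨y, hy, hmin⟩ := Multiset.exists_min_image f hr0
  have hpow : f y ^ Multiset.card r ≤ (r.map f).prod := by
    simpa using Multiset.pow_card_le_prod (s := r.map f) (a := f y) (by simpa using hmin)
  have hy1 : f y < 1 := by
    by_contra! h
    exact (one_le_pow_of_one_le' h _).not_gt (hpow.trans_lt hr_lt)
  refine ⟨y, hy, hy1, ?_⟩
  calc f y ^ n * f x ≤ (r.map f).prod * f x :=
        mul_le_mul_left ((pow_le_pow_right_of_le_one' hy1.le (by omega)).trans hpow) _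
    _ = 1 := by rw [mul_comm, hprod]

theorem Polynomial.Monic.prod_nnnorm_aroots {K L : Type*} [Field K] [NormedField L]
    [IsAlgClosed L] [Algebra K L] {f : K[X]} (hf : f.Monic) :
    ((f.aroots L).map nnnorm).prod = ‖algebraMap K L (f.coeff 0)‖₊ := by
  have h := (IsAlgClosed.splits (f.map (algebraMap K L))).aeval_eq_prod_aroots_of_monic hf 0
  rw [aeval_def, eval₂_at_zero] at h
  rw [h, ← nnnormHom_apply, map_multiset_prod, Multiset.map_map]
  simp

theorem abs_coeff_zero_minpoly_eq_one {K : Type*} [Field K] [CharZero K] {x : K} {p : ℤ[X]}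
    (hp : p.Monic) (hx : aeval x p = 0) (hp0 : IsUnit (p.coeff 0)) :
    |(minpoly ℚ x).coeff 0| = 1 := by
  have hint : IsIntegral ℤ x := ⟨p, hp, hx⟩
  have hdvd : (minpoly ℤ x).coeff 0 ∣ p.coeff 0 := by
    simpa [coeff_zero_eq_eval_zero] using
      eval_dvd (x := 0) (minpoly.isIntegrallyClosed_dvd hint hx)
  rw [minpoly.isIntegrallyClosed_eq_field_fractions' ℚ hint, coeff_map]
  rcases Int.isUnit_iff.1 (isUnit_of_dvd_unit hdvd hp0) with h | h <;> simp [h]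

theorem aeval_eq_zero_of_mem_aroots_minpoly {K L : Type*} [Field K] [CharZero K] [CommRing L]
    [IsDomain L] [Algebra ℚ L] {x : K} {y : L} (hy : y ∈ (minpoly ℚ x).aroots L) {p : ℤ[X]}
    (hp : aeval x p = 0) : aeval y p = 0 := by
  rw [← aeval_map_algebraMap ℚ] at hp ⊢
  exact aeval_eq_zero_of_dvd_aeval_eq_zero (minpoly.dvd ℚ x hp) (mem_aroots'.1 hy).2

noncomputable def Φ (k : ℕ) : ℤ[X] := X ^ k - (2 * X ^ (k - 1) + ∑ i ∈ range (k - 1), X ^ i)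

theorem aeval_Φ {A : Type*} [CommRing A] (k : ℕ) (x : A) :
    aeval x (Φ k) = x ^ k - (2 * x ^ (k - 1) + ∑ i ∈ range (k - 1), x ^ i) := by
  simp [Φ, map_ofNat]

theorem degree_Φ_tail_lt {k : ℕ} (hk : 1 ≤ k) :
    (2 * X ^ (k - 1) + ∑ i ∈ range (k - 1), X ^ i : ℤ[X]).degree < k := by
  refine (degree_le_of_natDegree_le (n := k - 1) ?_).trans_lt
    (by exact_mod_cast (by omega : k - 1 < k))
  refine natDegree_add_le_of_degree_le ?_ (natDegree_sum_le_of_forall_le _ _ fun i hi => ?_)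
  · compute_degree
  · simpa using (mem_range.1 hi).le

theorem Φ_monic {k : ℕ} (hk : 1 ≤ k) : (Φ k).Monic :=
  monic_X_pow_sub (degree_Φ_tail_lt hk)

theorem Φ_natDegree {k : ℕ} (hk : 1 ≤ k) : (Φ k).natDegree = k := by
  refine natDegree_eq_of_degree_eq_some ?_
  rw [Φ, degree_sub_eq_left_of_degree_lt, degree_X_pow]
  simpa using degree_Φ_tail_lt hk

theorem Φ_coeff_zero {k : ℕ} (hk : 2 ≤ k) : (Φ k).coeff 0 = -1 := by
  rw [Φ, coeff_sub, coeff_add, finsetSum_coeff, coeff_ofNat_mul, coeff_X_pow, coeff_X_pow,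
    if_neg (by omega), if_neg (by omega)]
  simp [coeff_X_pow, (by omega : 1 < k)]

theorem IsDomRoot.aeval_Φ_eq_zero {k : ℕ} {γ : ℝ} (hγ : IsDomRoot k γ) : aeval γ (Φ k) = 0 := by
  rw [aeval_Φ, hγ.2, sub_self]

theorem pow_mul_sq_sub_three_mul_add_one_eq_neg_one {R : Type*} [CommRing R] {k : ℕ}
    (hk : 1 ≤ k) {x : R} (hx : aeval x (Φ k) = 0) : x ^ (k - 1) * (x ^ 2 - 3 * x + 1) = -1 := by
  obtain ⟨j, rfl⟩ : ∃ j, k = j + 1 := ⟨k - 1, by omega⟩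
  rw [aeval_Φ, Nat.add_sub_cancel] at hx
  rw [Nat.add_sub_cancel]
  linear_combination (x - 1) * hx + geom_sum_mul x j

theorem IsDomRoot.twelve_fifths_lt {k : ℕ} (hk : 2 ≤ k) {γ : ℝ} (hγ : IsDomRoot k γ) :
    12 / 5 < γ := by
  obtain ⟨j, rfl⟩ : ∃ j, k = j + 2 := ⟨k - 2, by omega⟩
  obtain ⟨hγ1, hγk⟩ := hγ
  simp only [show j + 2 - 1 = j + 1 by omega, sum_range_succ] at hγk
  have hsum : 0 ≤ ∑ i ∈ range j, γ ^ i := sum_nonneg fun i _ => by positivity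
  have hsq : 2 * γ + 1 ≤ γ ^ 2 := by
    refine le_of_mul_le_mul_left ?_ (by positivity : 0 < γ ^ j)
    linear_combination -hγk + hsum
  nlinarith

def gDen {R : Type*} [CommRing R] (k : ℕ) (z : R) : R :=
  ((k : R) + 1) * z ^ 2 - 3 * (k : R) * z + ((k : R) - 1)

theorem g_eq (k : ℕ) (z : ℝ) : g k z = (z - 1) / gDen k z := rfl

theorem mul_gDen_eq_of_mul_g_eq {k n : ℕ} {γ c : ℝ} (hγ : γ ≠ 0) (hc : c ≠ 0)
    (h : (2 * γ - 2) * g k γ = c / 81 * γ ^ (-(n : ℤ))) :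
    162 * (γ - 1) ^ 2 * γ ^ n = c * gDen k γ := by
  have hD : gDen k γ ≠ 0 := by
    rintro hD
    rw [g_eq, hD, div_zero, mul_zero] at h
    exact mul_ne_zero (div_ne_zero hc (by norm_num)) (zpow_ne_zero _ hγ) h.symm
  rw [g_eq, zpow_neg, zpow_natCast] at h
  field_simp at h
  linear_combination h

theorem aeval_gDen {R A : Type*} [CommRing R] [CommRing A] [Algebra R A] (k : ℕ) (x : A) :
    aeval x (gDen k (X : R[X])) = gDen k x := by
  simp [gDen, map_ofNat]

theorem mul_sub_one_sq_mul_pow_eq_mul_gDen_of_mem_aroots {K L : Type*} [Field K] [CharZero K]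
    [CommRing L] [IsDomain L] [Algebra ℚ L] {k n N : ℕ} {x : K} {y : L}
    (hy : y ∈ (minpoly ℚ x).aroots L) (h : 162 * (x - 1) ^ 2 * x ^ n = N * gDen k x) :
    162 * (y - 1) ^ 2 * y ^ n = N * gDen k y := by
  have := aeval_eq_zero_of_mem_aroots_minpoly hy
    (p := 162 * (X - 1) ^ 2 * X ^ n - (N : ℤ[X]) * gDen k X)
    (by simp [aeval_gDen, map_ofNat, h])
  simpa [aeval_gDen, map_ofNat, sub_eq_zero] using this

theorem IsDomRoot.exists_conj_norm_lt_one {k : ℕ} (hk : 2 ≤ k) {γ : ℝ} (hγ : IsDomRoot k γ) :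
    ∃ θ ∈ (minpoly ℚ γ).aroots ℂ, ‖θ‖ < 1 ∧ ‖θ‖ ^ (k - 1) * γ ≤ 1 := by
  have hΦ := hγ.aeval_Φ_eq_zero
  have hΦℚ : aeval γ ((Φ k).map (algebraMap ℤ ℚ)) = 0 := by rwa [aeval_map_algebraMap]
  have hint : IsIntegral ℚ γ := ⟨_, (Φ_monic (by omega)).map _, hΦℚ⟩
  have hprod : ((minpoly ℚ γ).aroots ℂ |>.map nnnorm).prod = 1 := by
    have h := abs_coeff_zero_minpoly_eq_one (Φ_monic (by omega)) hΦ (by simp [Φ_coeff_zero hk])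
    rw [(minpoly.monic hint).prod_nnnorm_aroots]
    ext
    simpa [← Rat.norm_cast_real] using congrArg (Rat.cast : ℚ → ℝ) h
  have hγmem : (γ : ℂ) ∈ (minpoly ℚ γ).aroots ℂ := by
    refine mem_aroots.2 ⟨minpoly.ne_zero hint, ?_⟩
    simpa using aeval_algebraMap_apply ℂ γ (minpoly ℚ γ)
  have hcard : Multiset.card ((minpoly ℚ γ).aroots ℂ) ≤ k - 1 + 1 := by
    rw [IsAlgClosed.card_aroots_eq_natDegree]
    have := natDegree_le_of_dvd (minpoly.dvd ℚ γ hΦℚ) ((Φ_monic (by omega)).map _).ne_zero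
    rw [(Φ_monic (by omega)).natDegree_map, Φ_natDegree (by omega)] at this
    omega
  have hγ1 : 1 < ‖(γ : ℂ)‖₊ := by
    rw [← NNReal.coe_lt_coe]
    simpa [abs_of_pos (zero_lt_one.trans hγ.1)] using hγ.1
  obtain ⟨θ, hθ, hθ1, hθk⟩ := Multiset.exists_mem_erase_pow_mul_le_one _ hγmem hγ1 hprod hcard
  refine ⟨θ, Multiset.mem_of_mem_erase hθ, by simpa using NNReal.coe_lt_coe.2 hθ1, ?_⟩
  simpa [abs_of_pos (zero_lt_one.trans hγ.1)] using NNReal.coe_le_coe.2 hθk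

theorem mul_one_add_sq_mul_pow_lt {k : ℕ} (hk : 2 ≤ k) {t : ℝ} (ht0 : 0 ≤ t) (ht1 : t < 1)
    (hs : t ^ (k - 1) * (12 / 5) ≤ 1) :
    162 * (1 + t) ^ 2 * t * t ^ (k - 1) < 100 * (k - 2 * t ^ (k - 1)) := by
  obtain ⟨j, rfl⟩ : ∃ j, k = j + 2 := ⟨k - 2, by omega⟩
  rcases j with _ | _ | j
  · norm_num at hs ⊢
    have h1 : (1 + t) ^ 2 ≤ (17 / 12) ^ 2 := by gcongr; linarith
    have h2 : t * t ≤ (5 / 12) ^ 2 := by nlinarith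
    nlinarith [mul_le_mul h1 h2 (by positivity) (by positivity)]
  · norm_num at hs ⊢
    have ht : t ≤ 13 / 20 := by nlinarith
    have h1 : (1 + t) ^ 2 ≤ (33 / 20) ^ 2 := by gcongr; linarith
    have h2 : t * t ^ 2 ≤ 13 / 20 * (5 / 12) := by
      exact mul_le_mul ht (by linarith) (by positivity) (by norm_num)
    nlinarith [mul_le_mul h1 h2 (by positivity) (by positivity)]
  · rw [show j + 1 + 1 + 2 - 1 = j + 3 by omega] at hs ⊢
    have hs0 : 0 ≤ t ^ (j + 3) := by positivity
    have h1 : (1 + t) ^ 2 * t ≤ 4 := by nlinarith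
    push_cast
    nlinarith [mul_le_mul_of_nonneg_right h1 hs0]

theorem sub_two_mul_pow_le_norm_gDen_mul_pow {k : ℕ} {θ : ℂ} (hθ : ‖θ‖ ≤ 1)
    (hΦ : θ ^ (k - 1) * (θ ^ 2 - 3 * θ + 1) = -1) :
    k - 2 * ‖θ‖ ^ (k - 1) ≤ ‖gDen k θ‖ * ‖θ‖ ^ (k - 1) := by
  have hkey : gDen k θ * θ ^ (k - 1) = (θ ^ 2 - 1) * θ ^ (k - 1) - k := by
    unfold gDen
    linear_combination (k : ℂ) * hΦ
  have hsq : ‖θ ^ 2 - 1‖ ≤ 2 := by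
    calc ‖θ ^ 2 - 1‖ ≤ ‖θ‖ ^ 2 + 1 := (norm_sub_le _ _).trans_eq (by rw [norm_pow, norm_one])
      _ ≤ 2 := by nlinarith [norm_nonneg θ]
  calc (k : ℝ) - 2 * ‖θ‖ ^ (k - 1) ≤ ‖(k : ℂ)‖ - ‖(θ ^ 2 - 1) * θ ^ (k - 1)‖ := by
        rw [Complex.norm_natCast, norm_mul, norm_pow]
        gcongr
    _ ≤ ‖(θ ^ 2 - 1) * θ ^ (k - 1) - k‖ := by
        rw [norm_sub_rev]
        exact norm_sub_norm_le _ _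
    _ = ‖gDen k θ‖ * ‖θ‖ ^ (k - 1) := by rw [← hkey, norm_mul, norm_pow]

theorem mul_sub_one_sq_mul_pow_ne_mul_gDen {k n N : ℕ} (hk : 2 ≤ k) (hn : 1 ≤ n) (hN : 100 ≤ N)
    {θ : ℂ} (hθ1 : ‖θ‖ < 1) (hθk : ‖θ‖ ^ (k - 1) * (12 / 5) ≤ 1)
    (hΦ : θ ^ (k - 1) * (θ ^ 2 - 3 * θ + 1) = -1) :
    162 * (θ - 1) ^ 2 * θ ^ n ≠ N * gDen k θ := by
  intro h
  have hupper : N * ‖gDen k θ‖ ≤ 162 * (1 + ‖θ‖) ^ 2 * ‖θ‖ := by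
    calc N * ‖gDen k θ‖ = 162 * ‖θ - 1‖ ^ 2 * ‖θ‖ ^ n := by
          simpa [norm_mul, norm_pow] using congrArg norm h.symm
      _ ≤ 162 * (1 + ‖θ‖) ^ 2 * ‖θ‖ := by
          gcongr
          · simpa [add_comm] using norm_sub_le θ 1
          · exact pow_le_of_le_one (norm_nonneg θ) hθ1.le (by omega)
  have hN' : (100 : ℝ) ≤ N := by exact_mod_cast hN
  have hchain := calc
    100 * (k - 2 * ‖θ‖ ^ (k - 1)) ≤ 100 * (‖gDen k θ‖ * ‖θ‖ ^ (k - 1)) :=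
        by gcongr; exact sub_two_mul_pow_le_norm_gDen_mul_pow hθ1.le hΦ
    _ ≤ N * ‖gDen k θ‖ * ‖θ‖ ^ (k - 1) := by rw [mul_assoc (N : ℝ)]; gcongr
    _ ≤ 162 * (1 + ‖θ‖) ^ 2 * ‖θ‖ * ‖θ‖ ^ (k - 1) := by gcongr
  exact (mul_one_add_sq_mul_pow_lt hk (norm_nonneg θ) hθ1 hθk).not_ge hchain

theorem Lambda_one_ne_zero (k : ℕ) (hk : 2 ≤ k) (γ : ℝ) (hγ : IsDomRoot k γ) :
    ¬∃ (n m l a b : ℕ), 1 ≤ n ∧ 1 ≤ m ∧ 1 ≤ l ∧ 1 ≤ a ∧ a ≤ 9 ∧ 1 ≤ b ∧ b ≤ 9 ∧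
      (2 * γ - 2) * g k γ = ((a : ℝ) * (b : ℝ) / 81) * γ ^ (-(n : ℤ)) * 10 ^ (m + l) := by
  rintro ⟨n, m, l, a, b, hn, hm, hl, ha, -, hb, -, hE⟩
  have hN : 100 ≤ a * b * 10 ^ (m + l) :=
    calc 100 = 1 * 1 * 10 ^ 2 := by norm_num
      _ ≤ a * b * 10 ^ (m + l) := by gcongr <;> omega
  have hγ0 : γ ≠ 0 := (zero_lt_one.trans hγ.1).ne'
  have hN0 : ((a * b * 10 ^ (m + l) : ℕ) : ℝ) ≠ 0 := Nat.cast_ne_zero.2 (by omega)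
  have hrel : 162 * (γ - 1) ^ 2 * γ ^ n = ((a * b * 10 ^ (m + l) : ℕ) : ℝ) * gDen k γ :=
    mul_gDen_eq_of_mul_g_eq hγ0 hN0 (hE.trans (by push_cast; ring))
  obtain ⟨θ, hθ, hθ1, hθk⟩ := hγ.exists_conj_norm_lt_one hk
  refine mul_sub_one_sq_mul_pow_ne_mul_gDen hk hn hN hθ1 ?_ ?_
    (mul_sub_one_sq_mul_pow_eq_mul_gDen_of_mem_aroots hθ hrel)
  · nlinarith [hγ.twelve_fifths_lt hk, pow_nonneg (norm_nonneg θ) (k - 1)]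
  · exact pow_mul_sq_sub_three_mul_add_one_eq_neg_one (by omega)
      (aeval_eq_zero_of_mem_aroots_minpoly hθ hγ.aeval_Φ_eq_zero)
end

section
/- There are no positive integers n, m, l and digits 1 ≤ a, b ≤ 9 such that ab·10^{m+l}·(φ+2)/162 = φ^{2n+1}, where φ = (1+√5)/2. -/
open Real

theorem Irrational.eq_of_ratCast_mul_add_eq {x : ℝ} (hx : Irrational x) {a b c d : ℚ}
    (h : a * x + b = c * x + d) : a = c ∧ b = d := by
  have hac : a = c := by
    by_contra hne
    refine ((hx.ratCast_mul (sub_ne_zero.2 hne)).add_ratCast (b - d)).ne_zero ?_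
    push_cast
    linarith
  subst hac
  exact ⟨rfl, by exact_mod_cast add_left_cancel h⟩

theorem ratCast_mul_goldenRatio_add_two_ne_pow (q : ℚ) (k : ℕ) :
    q * (goldenRatio + 2) ≠ goldenRatio ^ (k + 1) := by
  intro h
  rw [← goldenRatio_mul_fib_succ_add_fib] at h
  obtain ⟨hq, h2q⟩ := goldenRatio_irrational.eq_of_ratCast_mul_add_eq
    (a := q) (b := 2 * q) (c := Nat.fib (k + 1)) (d := Nat.fib k) (by push_cast; linarith)
  have hfib : 2 * Nat.fib (k + 1) = Nat.fib k := by exact_mod_cast hq ▸ h2q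
  have hle : Nat.fib k ≤ Nat.fib (k + 1) := Nat.fib_le_fib_succ
  have hpos : 0 < Nat.fib (k + 1) := Nat.fib_pos.2 k.succ_pos
  omega

theorem Lambda_three_ne_zero :
    ¬∃ (n m l a b : ℕ), 1 ≤ n ∧ 1 ≤ m ∧ 1 ≤ l ∧ 1 ≤ a ∧ a ≤ 9 ∧ 1 ≤ b ∧ b ≤ 9 ∧
      (a : ℝ) * (b : ℝ) * 10 ^ (m + l) * (φ + 2) / 162 = φ ^ (2 * n + 1) := by
  rintro ⟨n, m, l, a, b, -, -, -, -, -, -, -, heq⟩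
  refine ratCast_mul_goldenRatio_add_two_ne_pow (a * b * 10 ^ (m + l) / 162) (2 * n) ?_
  have hφ : φ = goldenRatio := rfl
  rw [← hφ, ← heq]
  push_cast
  ring
end
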